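/- Let X_1, X_2, … be real random variables with continuous marginal cdfs (so that X_1, …, X_n are almost surely pairwise distinct), and let Y_1, Y_2, … be identically distributed real random variables on the same probability space with E(|Y_1|^p) < ∞ for some p ≥ 1. Let Y_{t,n} = Σ_{s=1}^n Y_s·1{X_s = X_{t:n}} denote the concomitants of Y_1,…,Y_n with respect to X_1,…,X_n. If the outputs are out of p-reasonable order with respect to the inputs, i.e., B_{n,p} := n^{-1/p} Σ_{t=2}^n |Y_{t,n} − Y_{t-1,n}| → ∞ in probability, then I_n := Σ_{t=2}^n (Y_{t,n} − Y_{t-1,n})_+ / Σ_{t=2}^n |Y_{t,n} − Y_{t-1,n}| → 1/2 in probability as n → ∞. -/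

import Mathlib

open MeasureTheory ProbabilityTheory Filter
open scoped Classical

/-- The `t`-th order statistic (1-based) of `X 1, …, X n`. -/
noncomputable def orderStat {Ω : Type*} (X : ℕ → Ω → ℝ) (n t : ℕ) (ω : Ω) : ℝ :=
  (List.insertionSort (· ≤ ·) ((List.range n).map fun s => X (s + 1) ω)).getD (t - 1) 0

/-- The concomitant `Y_{t,n} = Σ_{s=1}^n Y_s · 1{X_s = X_{t:n}}`. -/
noncomputable def concomitant {Ω : Type*} (X Y : ℕ → Ω → ℝ) (n t : ℕ) (ω : Ω) : ℝ :=
  ∑ s ∈ Finset.Icc 1 n, Y s ω * (if X s ω = orderStat X n t ω then 1 else 0)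

/-- The cumulative distribution function of a random variable `X` under `P`. -/
noncomputable def cdfOf {Ω : Type*} [MeasurableSpace Ω] (P : Measure Ω) (X : Ω → ℝ) : ℝ → ℝ :=
  fun x => (P {ω | X ω ≤ x}).toReal

/-- Convergence in probability of `Z n` to the constant `c`. -/
def TendstoInProb {Ω : Type*} [MeasurableSpace Ω] (P : Measure Ω)
    (Z : ℕ → Ω → ℝ) (c : ℝ) : Prop :=
  ∀ ε : ℝ, 0 < ε → Tendsto (fun n => P {ω | ε ≤ |Z n ω - c|}) atTop (nhds 0)

/-- Convergence in probability of `Z n` to `+∞`. -/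
def TendstoInProbAtTop {Ω : Type*} [MeasurableSpace Ω] (P : Measure Ω)
    (Z : ℕ → Ω → ℝ) : Prop :=
  ∀ M : ℝ, Tendsto (fun n => P {ω | Z n ω ≤ M}) atTop (nhds 0)

/-!
Since `x₊ = (x + |x|) / 2`, the positive increments of the concomitants telescope:
`I_n - 1/2 = (Y_{n,n} - Y_{1,n}) / (2 Σ_t |Y_{t,n} - Y_{t-1,n}|)`. Away from ties both concomitants
are among `Y_1, …, Y_n`, so if `I_n` is `ε`-far from `1/2` then either the denominator is at most
`n^{1/p}` (probability → 0 by hypothesis) or some `|Y_s| ≥ ε n^{1/p}`, which by a union bound and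
identical distribution has probability at most `n P(|Y_1| ≥ ε n^{1/p}) → 0` since `E|Y_1|^p < ∞`.
-/

open scoped ENNReal Topology
open Finset

section Tail

variable {α : Type*} [MeasurableSpace α] {μ : Measure α}

theorem tendsto_natCast_mul_meas_ge_of_lintegral_ne_top {f : α → ℝ≥0∞} (hf : AEMeasurable f μ)
    (hfin : ∫⁻ x, f x ∂μ ≠ ∞) :
    Tendsto (fun n : ℕ => (n : ℝ≥0∞) * μ {x | (n : ℝ≥0∞) ≤ f x}) atTop (𝓝 0) := by
  set s : ℕ → Set α := fun n => {x | (n : ℝ≥0∞) ≤ f x}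
  have hs : Tendsto (μ ∘ s) atTop (𝓝 0) := by
    have hdiv : Tendsto (fun n : ℕ => (∫⁻ x, f x ∂μ) * (n : ℝ≥0∞)⁻¹) atTop (𝓝 0) := by
      simpa using ENNReal.Tendsto.const_mul ENNReal.tendsto_inv_nat_nhds_zero (Or.inr hfin)
    refine tendsto_of_tendsto_of_tendsto_of_le_of_le' tendsto_const_nhds hdiv
      (Eventually.of_forall fun _ => zero_le) ?_
    filter_upwards [eventually_ge_atTop 1] with n hn
    exact meas_ge_le_lintegral_div hf (by exact_mod_cast (Nat.one_le_iff_ne_zero.mp hn))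
      (ENNReal.natCast_ne_top n)
  refine tendsto_of_tendsto_of_tendsto_of_le_of_le tendsto_const_nhds
    (tendsto_setLIntegral_zero hfin hs) (fun _ => zero_le) fun n => ?_
  calc (n : ℝ≥0∞) * μ (s n) = n * μ.restrict (s n) (s n) := by rw [Measure.restrict_apply_self]
    _ ≤ ∫⁻ x in s n, f x ∂μ := mul_meas_ge_le_lintegral₀ hf.restrict _

theorem tendsto_natCast_mul_meas_ge_mul_rpow {Y : α → ℝ} {p ε : ℝ} (hp : 0 < p) (hε : 0 < ε)
    (hY : Integrable (fun x => |Y x| ^ p) μ) :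
    Tendsto (fun n : ℕ => (n : ℝ≥0∞) * μ {x | ε * (n : ℝ) ^ (1 / p) ≤ |Y x|}) atTop (𝓝 0) := by
  have hW := hY.div_const (ε ^ p)
  refine tendsto_of_tendsto_of_tendsto_of_le_of_le tendsto_const_nhds
    (tendsto_natCast_mul_meas_ge_of_lintegral_ne_top hW.aemeasurable.ennreal_ofReal
      hW.lintegral_lt_top.ne) (fun _ => zero_le) fun n => ?_
  refine mul_le_mul_right (measure_mono fun x hx => ?_) _
  rw [Set.mem_ofPred_eq, ← ENNReal.ofReal_natCast]
  refine ENNReal.ofReal_le_ofReal ((le_div_iff₀ (by positivity)).2 ?_)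
  calc (n : ℝ) * ε ^ p = (ε * (n : ℝ) ^ (1 / p)) ^ p := by
        rw [Real.mul_rpow hε.le (by positivity), ← Real.rpow_mul (Nat.cast_nonneg n),
          one_div_mul_cancel hp.ne', Real.rpow_one, mul_comm]
    _ ≤ |Y x| ^ p := Real.rpow_le_rpow (by positivity) hx hp.le

end Tail

theorem measure_biUnion_preimage_le_card_mul {α β γ ι : Type*} [MeasurableSpace α]
    [MeasurableSpace β] [MeasurableSpace γ] {μ : Measure α} {ν : Measure β} {Y : ι → α → γ}
    {Z : β → γ} {s : Finset ι} (hY : ∀ i ∈ s, IdentDistrib (Y i) Z μ ν) {S : Set γ}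
    (hS : MeasurableSet S) :
    μ (⋃ i ∈ s, Y i ⁻¹' S) ≤ #s * ν (Z ⁻¹' S) :=
  calc μ (⋃ i ∈ s, Y i ⁻¹' S) ≤ ∑ i ∈ s, μ (Y i ⁻¹' S) := measure_biUnion_finset_le _ _
    _ = ∑ i ∈ s, ν (Z ⁻¹' S) := sum_congr rfl fun i hi => (hY i hi).measure_mem_eq hS
    _ = #s * ν (Z ⁻¹' S) := by rw [sum_const, nsmul_eq_mul]

theorem ae_injOn_of_forall_ae_ne {α ι β : Type*} [MeasurableSpace α] [Countable ι]
    {μ : Measure α} {X : ι → α → β} {S : Set ι}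
    (h : ∀ s ∈ S, ∀ t ∈ S, s ≠ t → ∀ᵐ ω ∂μ, X s ω ≠ X t ω) :
    ∀ᵐ ω ∂μ, Set.InjOn (X · ω) S := by
  have hne : ∀ᵐ ω ∂μ, ∀ s, s ∈ S → ∀ t, t ∈ S → s ≠ t → X s ω ≠ X t ω := by
    simpa only [ae_all_iff, eventually_imp_distrib_left] using h
  filter_upwards [hne] with ω hω s hs t ht hst
  by_contra hne
  exact hω s hs t ht hne hst

theorem sum_Icc_two_sub_pred {M : Type*} [AddCommGroup M] (f : ℕ → M) {n : ℕ} (hn : 1 ≤ n) :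
    ∑ t ∈ Icc 2 n, (f t - f (t - 1)) = f n - f 1 := by
  rw [← Ico_add_one_right_eq_Icc, ← sum_Ico_add' (fun t => f t - f (t - 1)) 1 n 1]
  simpa using sum_Ico_sub f hn

/-- For `f t = Y_{t,n}` this is `n^{1/p} B_{n,p}`, and `positiveVariation f n / totalVariation f n`
is `I_n`. -/
def totalVariation (f : ℕ → ℝ) (n : ℕ) : ℝ :=
  ∑ t ∈ Icc 2 n, |f t - f (t - 1)|

def positiveVariation (f : ℕ → ℝ) (n : ℕ) : ℝ :=
  ∑ t ∈ Icc 2 n, max (f t - f (t - 1)) 0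

theorem positiveVariation_div_totalVariation_sub_half (f : ℕ → ℝ) {n : ℕ} (hn : 1 ≤ n)
    (hT : totalVariation f n ≠ 0) :
    positiveVariation f n / totalVariation f n - 1 / 2 = (f n - f 1) / (2 * totalVariation f n) := by
  have hmax : ∀ x : ℝ, max x 0 = (x + |x|) / 2 := fun x => by
    rcases le_total 0 x with h | h
    · rw [max_eq_left h, abs_of_nonneg h]; ring
    · rw [max_eq_right h, abs_of_nonpos h]; ring
  have hpos : positiveVariation f n = (f n - f 1 + totalVariation f n) / 2 := by
    simp only [positiveVariation, totalVariation, hmax, ← sum_div, sum_add_distrib,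
      sum_Icc_two_sub_pred f hn]
  rw [hpos]
  field_simp
  ring

theorem le_abs_or_le_abs_of_le_abs_variation_ratio_sub_half (f : ℕ → ℝ) {n : ℕ} (hn : 1 ≤ n)
    {c ε : ℝ} (hc : 0 ≤ c) (hT : c < totalVariation f n)
    (hε : ε ≤ |positiveVariation f n / totalVariation f n - 1 / 2|) :
    ε * c ≤ |f n| ∨ ε * c ≤ |f 1| := by
  have hT0 : 0 < totalVariation f n := hc.trans_lt hT
  have h2T : 0 < 2 * totalVariation f n := by linarith
  rw [positiveVariation_div_totalVariation_sub_half f hn hT0.ne', abs_div, abs_of_pos h2T,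
    le_div_iff₀ h2T] at hε
  by_contra! h
  nlinarith [abs_sub (f n) (f 1), abs_nonneg (f n)]

section Concomitant

variable {Ω : Type*} {X Y : ℕ → Ω → ℝ} {n t : ℕ} {ω : Ω}

theorem exists_eq_orderStat (h1 : 1 ≤ t) (h2 : t ≤ n) :
    ∃ s ∈ Icc 1 n, X s ω = orderStat X n t ω := by
  set L := (List.range n).map fun s => X (s + 1) ω
  have hlt : t - 1 < (L.insertionSort (· ≤ ·)).length := by
    rw [List.length_insertionSort, List.length_map, List.length_range]; omega
  have hmem : orderStat X n t ω ∈ L := by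
    rw [orderStat, List.getD_eq_getElem _ _ hlt]
    exact (List.perm_insertionSort _ L).subset (List.getElem_mem hlt)
  obtain ⟨s, hs, hval⟩ := List.mem_map.1 hmem
  exact ⟨s + 1, mem_Icc.2 ⟨by omega, by have := List.mem_range.1 hs; omega⟩, hval⟩

theorem exists_concomitant_eq_of_injOn (hinj : Set.InjOn (X · ω) (Icc 1 n)) (h1 : 1 ≤ t)
    (h2 : t ≤ n) : ∃ s ∈ Icc 1 n, concomitant X Y n t ω = Y s ω := by
  obtain ⟨s, hs, hval⟩ := exists_eq_orderStat h1 h2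
  refine ⟨s, hs, ?_⟩
  rw [concomitant, sum_eq_single_of_mem s hs fun r hr hrs => ?_, if_pos hval, mul_one]
  rw [if_neg fun h => hrs (hinj hr hs (h.trans hval.symm)), mul_zero]

theorem exists_le_abs_of_le_abs_concomitant_ratio_sub_half (hinj : Set.InjOn (X · ω) (Icc 1 n))
    (hn : 1 ≤ n) {c ε : ℝ} (hc : 0 ≤ c) (hT : c < totalVariation (concomitant X Y n · ω) n)
    (hε : ε ≤ |positiveVariation (concomitant X Y n · ω) n /
      totalVariation (concomitant X Y n · ω) n - 1 / 2|) :
    ∃ s ∈ Icc 1 n, ε * c ≤ |Y s ω| := by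
  rcases le_abs_or_le_abs_of_le_abs_variation_ratio_sub_half _ hn hc hT hε with h | h
  · obtain ⟨s, hs, heq⟩ := exists_concomitant_eq_of_injOn (Y := Y) hinj hn le_rfl
    exact ⟨s, hs, heq ▸ h⟩
  · obtain ⟨s, hs, heq⟩ := exists_concomitant_eq_of_injOn (Y := Y) hinj le_rfl hn
    exact ⟨s, hs, heq ▸ h⟩

theorem measure_le_abs_concomitant_ratio_sub_half_le [MeasurableSpace Ω] {P : Measure Ω}
    (hinj : ∀ᵐ ω ∂P, Set.InjOn (X · ω) (Set.Ici 1))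
    (hidY : ∀ t : ℕ, 1 ≤ t → IdentDistrib (Y t) (Y 1) P P) {p ε : ℝ} (hn : 1 ≤ n) :
    P {ω | ε ≤ |positiveVariation (concomitant X Y n · ω) n /
      totalVariation (concomitant X Y n · ω) n - 1 / 2|} ≤
      P {ω | (n : ℝ) ^ (-(1 / p)) * totalVariation (concomitant X Y n · ω) n ≤ 1} +
      n * P {ω | ε * (n : ℝ) ^ (1 / p) ≤ |Y 1 ω|} := by
  have hnpos : (0 : ℝ) < n := by exact_mod_cast hn
  calc _ ≤ P ({ω | (n : ℝ) ^ (-(1 / p)) * totalVariation (concomitant X Y n · ω) n ≤ 1} ∪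
        ⋃ s ∈ Icc 1 n, Y s ⁻¹' {y | ε * (n : ℝ) ^ (1 / p) ≤ |y|}) := by
        refine measure_mono_ae ?_
        filter_upwards [hinj] with ω hω hfar
        refine or_iff_not_imp_left.2 fun hT => ?_
        rw [Set.mem_ofPred_eq, not_le, Real.rpow_neg hnpos.le, inv_mul_eq_div,
          one_lt_div (by positivity)] at hT
        obtain ⟨s, hs, hYs⟩ := exists_le_abs_of_le_abs_concomitant_ratio_sub_half
          (Set.InjOn.mono (fun s hs => (mem_Icc.1 hs).1) hω) hn (by positivity) hT hfar
        exact Set.mem_biUnion hs hYs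
    _ ≤ _ := (measure_union_le _ _).trans (add_le_add_right
        (measure_biUnion_preimage_le_card_mul (fun s hs => hidY s (mem_Icc.1 hs).1)
          (measurableSet_le measurable_const continuous_abs.measurable)) _)
    _ = _ := by rw [Nat.card_Icc, Nat.add_sub_cancel]; rfl

end Concomitant

theorem stmt_10_general {Ω : Type*} [MeasurableSpace Ω] (P : Measure Ω)
    (X Y : ℕ → Ω → ℝ)
    (hdist : ∀ s t : ℕ, 1 ≤ s → 1 ≤ t → s ≠ t → ∀ᵐ ω ∂P, X s ω ≠ X t ω)
    (hidY : ∀ t : ℕ, 1 ≤ t → IdentDistrib (Y t) (Y 1) P P)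
    (p : ℝ) (hp : 1 ≤ p)
    (hmom : Integrable (fun ω => |Y 1 ω| ^ p) P)
    (hout : TendstoInProbAtTop P (fun n ω => (n : ℝ) ^ (-(1 / p)) *
      ∑ t ∈ Finset.Icc 2 n, |concomitant X Y n t ω - concomitant X Y n (t - 1) ω|)) :
    TendstoInProb P
      (fun n ω =>
        (∑ t ∈ Finset.Icc 2 n,
          max (concomitant X Y n t ω - concomitant X Y n (t - 1) ω) 0) /
        (∑ t ∈ Finset.Icc 2 n,
          |concomitant X Y n t ω - concomitant X Y n (t - 1) ω|))
      (1 / 2) := by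
  intro ε hε
  have hp0 : 0 < p := by linarith
  have hinj : ∀ᵐ ω ∂P, Set.InjOn (X · ω) (Set.Ici 1) :=
    ae_injOn_of_forall_ae_ne fun s hs t ht => hdist s t hs ht
  have hlim := (hout 1).add (tendsto_natCast_mul_meas_ge_mul_rpow hp0 hε hmom)
  rw [add_zero] at hlim
  exact tendsto_of_tendsto_of_tendsto_of_le_of_le' tendsto_const_nhds hlim
    (Eventually.of_forall fun _ => zero_le) (eventually_atTop.2 ⟨1, fun n hn =>
      measure_le_abs_concomitant_ratio_sub_half_le hinj hidY hn⟩)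

theorem stmt_10 {Ω : Type*} [MeasurableSpace Ω] (P : Measure Ω) [IsProbabilityMeasure P]
    (X Y : ℕ → Ω → ℝ) (hmeasX : ∀ t, Measurable (X t)) (hmeasY : ∀ t, Measurable (Y t))
    (hcdf : ∀ t : ℕ, 1 ≤ t → Continuous (cdfOf P (X t)))
    (hdist : ∀ s t : ℕ, 1 ≤ s → 1 ≤ t → s ≠ t → ∀ᵐ ω ∂P, X s ω ≠ X t ω)
    (hidY : ∀ t : ℕ, 1 ≤ t → IdentDistrib (Y t) (Y 1) P P)
    (p : ℝ) (hp : 1 ≤ p)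
    (hmom : Integrable (fun ω => |Y 1 ω| ^ p) P)
    (hout : TendstoInProbAtTop P (fun n ω => (n : ℝ) ^ (-(1 / p)) *
      ∑ t ∈ Finset.Icc 2 n, |concomitant X Y n t ω - concomitant X Y n (t - 1) ω|)) :
    TendstoInProb P
      (fun n ω =>
        (∑ t ∈ Finset.Icc 2 n,
          max (concomitant X Y n t ω - concomitant X Y n (t - 1) ω) 0) /
        (∑ t ∈ Finset.Icc 2 n,
          |concomitant X Y n t ω - concomitant X Y n (t - 1) ω|))
      (1 / 2) :=
  stmt_10_general P X Y hdist hidY p hp hmom hout
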